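/- Let u ∈ L^q(ℝ^d), 1 ≤ q ≤ ∞, s > 0, and suppose [u]_{s,l} < ∞ for some integer l > s. Then for any other integer m > s there is a constant C, depending only on s, l and m, such that [u]_{s,m} ≤ C [u]_{s,l}. -/

import Mathlib

noncomputable section

open MeasureTheory Finset
open scoped ENNReal BigOperators

/-- Finite difference of order 1: `Δ_h u (x) = u(x+h) - u(x)`.  The finite difference of
order `l` is `(fdiff h)^[l] u`. -/
def fdiff {V : Type*} [AddCommGroup V] (h : V) (u : V → ℂ) : V → ℂ :=
  fun x => u (x + h) - u x

/-- The Besov–Nikol'skii seminorm `[u]_{s,l} = sup_{h ≠ 0} |h|^{-s} ‖Δ_h^{(l)} u‖_{L^q}`. -/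
def besovSemi {V : Type*} [NormedAddCommGroup V] [MeasureSpace V]
    (s : ℝ) (q : ℝ≥0∞) (l : ℕ) (u : V → ℂ) : ℝ≥0∞ :=
  ⨆ (h : V) (_ : h ≠ 0),
    ENNReal.ofReal (‖h‖ ^ (-s)) * eLpNorm ((fdiff h)^[l] u) q volume

/-- The Besov–Nikol'skii norm `‖u‖_{N^s_q} = ‖u‖_{L^q} + [u]_{s,l}` with the canonical
choice `l = ⌊s⌋ + 1`. -/
def besovNorm {V : Type*} [NormedAddCommGroup V] [MeasureSpace V]
    (s : ℝ) (q : ℝ≥0∞) (u : V → ℂ) : ℝ≥0∞ :=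
  eLpNorm u q volume + besovSemi s q (⌊s⌋₊ + 1) u

/-- Membership `u ∈ N^s_q`. -/
def MemBesov {V : Type*} [NormedAddCommGroup V] [MeasureSpace V]
    (s : ℝ) (q : ℝ≥0∞) (u : V → ℂ) : Prop :=
  MemLp u q volume ∧ besovNorm s q u < ∞

/-- The Besov–Nikol'skii norm on a subset `Ω`:
`‖u‖_{N^s_q(Ω)} = inf {‖v‖_{N^s_q} : v ∈ N^s_q, v = u a.e. on Ω}`. -/
def besovNormOn {V : Type*} [NormedAddCommGroup V] [MeasureSpace V]
    (s : ℝ) (q : ℝ≥0∞) (Ω : Set V) (u : V → ℂ) : ℝ≥0∞ :=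
  ⨅ (v : V → ℂ) (_ : MemBesov s q v ∧ ∀ᵐ x, x ∈ Ω → v x = u x), besovNorm s q v

/-- The `L^q` norm (with essential-sup modification at `q = ∞`) of an
`ℝ≥0∞`-valued function. -/
def lqNorm {X : Type*} [MeasurableSpace X] (μ : Measure X) (q : ℝ≥0∞)
    (g : X → ℝ≥0∞) : ℝ≥0∞ :=
  if q = ∞ then essSup g μ else (∫⁻ x, g x ^ q.toReal ∂μ) ^ (1 / q.toReal)

/-! ### Auxiliary material for `statement7` -/

section RingIdentity
open Finset

lemma key_comm {R : Type*} [CommRing R] (t : R) (m : ℕ) :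
    (t^2 - 1)^m = ((2^m : ℕ) : R) * (t-1)^m +
      (∑ j ∈ range (m+1), (m.choose j : R) * ∑ i ∈ range j, t^i) * (t-1)^(m+1) := by
  have h1 : t^2 - 1 = (t+1)*(t-1) := by ring
  have h2 : (t+1)^m = ∑ j ∈ range (m+1), ((m.choose j : R)) * t^j := by
    rw [add_pow]; exact Finset.sum_congr rfl fun j hj => by ring
  have h3 : ∀ j, t^j = 1 + (∑ i ∈ range j, t^i) * (t-1) := fun j => by
    rw [geom_sum_mul]; ring
  calc (t^2-1)^m = (t+1)^m * (t-1)^m := by rw [h1, mul_pow]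
    _ = (∑ j ∈ range (m+1), ((m.choose j : R)) * (1 + (∑ i ∈ range j, t^i) * (t-1))) * (t-1)^m := by
        rw [h2]; congr 1; exact Finset.sum_congr rfl fun j _ => by rw [← h3]
    _ = (((2^m : ℕ) : R) + (∑ j ∈ range (m+1), (m.choose j : R) * ∑ i ∈ range j, t^i) * (t-1)) * (t-1)^m := by
        congr 1
        rw [Finset.sum_mul]
        simp only [mul_add, mul_one]
        rw [Finset.sum_add_distrib]
        congr 1
        · rw [← Nat.cast_sum, Nat.sum_range_choose]
        · exact Finset.sum_congr rfl fun j _ => by ring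
    _ = _ := by ring

lemma key_ring {A : Type*} [Ring A] (t : A) (m : ℕ) :
    (t^2 - 1)^m = ((2^m : ℕ) : A) * (t-1)^m +
      (∑ j ∈ range (m+1), (m.choose j : A) * ∑ i ∈ range j, t^i) * (t-1)^(m+1) := by
  have h := key_comm (Polynomial.X : Polynomial ℤ) m
  have h2 := congrArg (Polynomial.aeval t : Polynomial ℤ →ₐ[ℤ] A) h
  simpa [map_ofNat] using h2

end RingIdentity

section TransOp
variable {V : Type*} [AddCommGroup V]

/-- Translation operator as a linear map. -/
def transOp (h : V) : (V → ℂ) →ₗ[ℂ] (V → ℂ) where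
  toFun u := fun x => u (x + h)
  map_add' _ _ := rfl
  map_smul' _ _ := rfl

lemma transOp_mul (a b : V) : (transOp a * transOp b : Module.End ℂ (V → ℂ)) = transOp (a + b) := by
  ext u x
  simp [transOp, Module.End.mul_apply, add_assoc]

lemma transOp_pow (h : V) (i : ℕ) :
    ((transOp h) ^ i : Module.End ℂ (V → ℂ)) = transOp (i • h) := by
  induction i with
  | zero => ext u x; simp [transOp]
  | succ n ih => rw [pow_succ, ih, transOp_mul, succ_nsmul]

lemma fdiff_eq (h : V) (u : V → ℂ) :
    fdiff h u = (transOp h - 1 : Module.End ℂ (V → ℂ)) u := rfl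

lemma fdiff_iter_eq (h : V) (u : V → ℂ) (k : ℕ) :
    (fdiff h)^[k] u = ((transOp h - 1 : Module.End ℂ (V → ℂ)) ^ k) u := by
  induction k generalizing u with
  | zero => rfl
  | succ n ih =>
      rw [Function.iterate_succ_apply, ih, fdiff_eq, ← Module.End.mul_apply, ← pow_succ]

lemma fdiff_doubling (h : V) (u : V → ℂ) (m : ℕ) :
    (2^m : ℕ) • (fdiff h)^[m] u =
      (fdiff (h+h))^[m] u -
        ∑ j ∈ Finset.range (m+1), (m.choose j) •
          ∑ i ∈ Finset.range j, (fun x => ((fdiff h)^[m+1] u) (x + i • h)) := by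
  have H := key_ring (transOp h : Module.End ℂ (V → ℂ)) m
  have hT2 : (transOp h : Module.End ℂ (V → ℂ)) ^ 2 = transOp (h + h) := by
    rw [pow_two, transOp_mul]
  have H2 := congrArg (fun L : Module.End ℂ (V → ℂ) => L u) H
  simp only [hT2] at H2
  rw [LinearMap.add_apply, Module.End.mul_apply, Module.End.mul_apply] at H2
  rw [← fdiff_iter_eq, ← fdiff_iter_eq, ← fdiff_iter_eq] at H2
  rw [LinearMap.sum_apply] at H2
  simp only [Module.End.mul_apply, LinearMap.sum_apply, Module.End.natCast_apply,
    transOp_pow] at H2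
  symm
  rw [sub_eq_iff_eq_add]
  exact H2

end TransOp

section Meas
variable {V : Type*} [NormedAddCommGroup V] [MeasureSpace V]
  [MeasurableAdd V] [(volume : Measure V).IsAddRightInvariant]
  {q : ℝ≥0∞} {v u : V → ℂ}

lemma aesm_translate (a : V) (hv : AEStronglyMeasurable v volume) :
    AEStronglyMeasurable (fun x => v (x + a)) volume :=
  hv.comp_quasiMeasurePreserving (measurePreserving_add_right volume a).quasiMeasurePreserving

lemma eLpNorm_translate (a : V) (hv : AEStronglyMeasurable v volume) :
    eLpNorm (fun x => v (x + a)) q volume = eLpNorm v q volume :=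
  eLpNorm_comp_measurePreserving hv (measurePreserving_add_right volume a)

lemma aesm_fdiff (h : V) (hv : AEStronglyMeasurable v volume) :
    AEStronglyMeasurable (fdiff h v) volume :=
  (aesm_translate h hv).sub hv

lemma aesm_fdiff_iter (h : V) (hv : AEStronglyMeasurable v volume) (k : ℕ) :
    AEStronglyMeasurable ((fdiff h)^[k] v) volume := by
  induction k generalizing v with
  | zero => exact hv
  | succ n ih => rw [Function.iterate_succ_apply]; exact ih (aesm_fdiff h hv)

lemma eLpNorm_fdiff_le (hq : 1 ≤ q) (h : V) (hv : AEStronglyMeasurable v volume) :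
    eLpNorm (fdiff h v) q volume ≤ 2 * eLpNorm v q volume := by
  have : fdiff h v = (fun x => v (x + h)) - v := rfl
  rw [this, two_mul]
  calc eLpNorm ((fun x => v (x + h)) - v) q volume
      ≤ eLpNorm (fun x => v (x + h)) q volume + eLpNorm v q volume :=
        eLpNorm_sub_le (aesm_translate h hv) hv hq
    _ = _ := by rw [eLpNorm_translate h hv]

lemma eLpNorm_fdiff_iter_le (hq : 1 ≤ q) (h : V) (hv : AEStronglyMeasurable v volume) (k : ℕ) :
    eLpNorm ((fdiff h)^[k] v) q volume ≤ 2 ^ k * eLpNorm v q volume := by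
  induction k with
  | zero => simp
  | succ n ih =>
      rw [Function.iterate_succ_apply']
      calc eLpNorm (fdiff h ((fdiff h)^[n] v)) q volume
          ≤ 2 * eLpNorm ((fdiff h)^[n] v) q volume :=
            eLpNorm_fdiff_le hq h (aesm_fdiff_iter h hv n)
        _ ≤ 2 * (2 ^ n * eLpNorm v q volume) := by gcongr
        _ = 2 ^ (n+1) * eLpNorm v q volume := by ring

end Meas

/-- The combinatorial constant in the Marchaud-type step. -/
def marchC (m : ℕ) : ℕ := ∑ j ∈ Finset.range (m+1), m.choose j * j

/-- The geometric-series constant in the Marchaud inequality. -/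
def marchK (s : ℝ) (m : ℕ) : ℝ≥0∞ :=
  ∑' i : ℕ, (((2:ℝ≥0∞)^m)⁻¹)^(i+1) * (ENNReal.ofReal ((2:ℝ)^s))^i

lemma marchK_ne_top {s : ℝ} {m : ℕ} (hm : s < m) : marchK s m ≠ ∞ := by
  set b := ((2:ℝ≥0∞)^m)⁻¹ with hb
  set r := ENNReal.ofReal ((2:ℝ)^s) with hr
  have h2m_ne0 : (2:ℝ≥0∞)^m ≠ 0 := pow_ne_zero _ two_ne_zero
  have h2m_netop : (2:ℝ≥0∞)^m ≠ ∞ := ENNReal.pow_ne_top ENNReal.ofNat_ne_top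
  have h2m : (2:ℝ≥0∞)^m = ENNReal.ofReal ((2:ℝ)^m) := by
    rw [ENNReal.ofReal_pow (by norm_num : (0:ℝ) ≤ 2), ENNReal.ofReal_ofNat]
  have hrlt : r < (2:ℝ≥0∞)^m := by
    rw [hr, h2m]
    rw [ENNReal.ofReal_lt_ofReal_iff (by positivity)]
    calc (2:ℝ)^s < (2:ℝ)^(m:ℝ) := by
          exact (Real.rpow_lt_rpow_left_iff (by norm_num)).mpr hm
      _ = (2:ℝ)^(m:ℕ) := by rw [Real.rpow_natCast]
  have hbr : b * r < 1 := by
    calc b * r < b * (2:ℝ≥0∞)^m := by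
          rw [ENNReal.mul_lt_mul_iff_right (by simp [hb, h2m_netop]) (by simp [hb, h2m_ne0])]
          exact hrlt
      _ = 1 := ENNReal.inv_mul_cancel h2m_ne0 h2m_netop
  have : marchK s m = b * (1 - b*r)⁻¹ := by
    rw [marchK, ← ENNReal.tsum_geometric (b*r), ← ENNReal.tsum_mul_left]
    exact tsum_congr fun i => by rw [pow_succ', mul_pow]; ring
  rw [this]
  refine ENNReal.mul_ne_top (by simp [hb, h2m_ne0]) ?_
  simp only [ne_eq, ENNReal.inv_eq_top]
  rw [tsub_eq_zero_iff_le]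
  exact fun hle => absurd hbr (not_lt.mpr hle)

section Step
variable {V : Type*} [NormedAddCommGroup V] [MeasureSpace V]
  [MeasurableAdd V] [(volume : Measure V).IsAddRightInvariant]
  {q : ℝ≥0∞} {u : V → ℂ}

lemma step_ineq (hq : 1 ≤ q) (hu : AEStronglyMeasurable u volume) (h : V) (m : ℕ) :
    (2^m : ℝ≥0∞) * eLpNorm ((fdiff h)^[m] u) q volume ≤
      eLpNorm ((fdiff (h+h))^[m] u) q volume +
        (marchC m : ℝ≥0∞) * eLpNorm ((fdiff h)^[m+1] u) q volume := by
  set D := fun (v : V → ℂ) => eLpNorm v q volume with hD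
  have hsmul : ∀ (n : ℕ) (v : V → ℂ), D (n • v) = (n : ℝ≥0∞) * D v := fun n v =>
    eLpNorm_nsmul n v
  have aesmg : ∀ j : ℕ, AEStronglyMeasurable
      (∑ i ∈ Finset.range j, (fun x => ((fdiff h)^[m+1] u) (x + i • h))) volume := by
    intro j
    exact Finset.aestronglyMeasurable_sum _ fun i _ =>
      aesm_translate (i • h) (aesm_fdiff_iter h hu (m+1))
  have aesmS : AEStronglyMeasurable
      (∑ j ∈ Finset.range (m+1), (m.choose j) •
        ∑ i ∈ Finset.range j, (fun x => ((fdiff h)^[m+1] u) (x + i • h))) volume := by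
    refine Finset.aestronglyMeasurable_sum _ fun j _ => ?_
    rw [← Nat.cast_smul_eq_nsmul ℂ]
    exact (aesmg j).const_smul _
  calc (2^m : ℝ≥0∞) * D ((fdiff h)^[m] u)
      = D ((2^m : ℕ) • (fdiff h)^[m] u) := by rw [hsmul]; push_cast; ring
    _ = D ((fdiff (h+h))^[m] u -
        ∑ j ∈ Finset.range (m+1), (m.choose j) •
          ∑ i ∈ Finset.range j, (fun x => ((fdiff h)^[m+1] u) (x + i • h))) := by
        rw [fdiff_doubling]
    _ ≤ D ((fdiff (h+h))^[m] u) +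
        D (∑ j ∈ Finset.range (m+1), (m.choose j) •
          ∑ i ∈ Finset.range j, (fun x => ((fdiff h)^[m+1] u) (x + i • h))) :=
        eLpNorm_sub_le (aesm_fdiff_iter (h+h) hu m) aesmS hq
    _ ≤ D ((fdiff (h+h))^[m] u) + (marchC m : ℝ≥0∞) * D ((fdiff h)^[m+1] u) := by
        gcongr
        calc D (∑ j ∈ Finset.range (m+1), (m.choose j) •
              ∑ i ∈ Finset.range j, (fun x => ((fdiff h)^[m+1] u) (x + i • h)))
            ≤ ∑ j ∈ Finset.range (m+1), D ((m.choose j) •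
              ∑ i ∈ Finset.range j, (fun x => ((fdiff h)^[m+1] u) (x + i • h))) := by
              refine eLpNorm_sum_le (fun j _ => ?_) hq
              rw [← Nat.cast_smul_eq_nsmul ℂ]
              exact (aesmg j).const_smul _
          _ ≤ ∑ j ∈ Finset.range (m+1), (m.choose j : ℝ≥0∞) * ((j : ℝ≥0∞) * D ((fdiff h)^[m+1] u)) := by
              refine Finset.sum_le_sum fun j _ => ?_
              rw [hsmul]
              gcongr
              calc D (∑ i ∈ Finset.range j, (fun x => ((fdiff h)^[m+1] u) (x + i • h)))
                  ≤ ∑ i ∈ Finset.range j, D (fun x => ((fdiff h)^[m+1] u) (x + i • h)) :=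
                    eLpNorm_sum_le (fun i _ =>
                      aesm_translate (i • h) (aesm_fdiff_iter h hu (m+1))) hq
                _ = ∑ i ∈ Finset.range j, D ((fdiff h)^[m+1] u) :=
                    Finset.sum_congr rfl fun i _ =>
                      eLpNorm_translate (i • h) (aesm_fdiff_iter h hu (m+1))
                _ = (j : ℝ≥0∞) * D ((fdiff h)^[m+1] u) := by
                    rw [Finset.sum_const, Finset.card_range, nsmul_eq_mul]
          _ = (marchC m : ℝ≥0∞) * D ((fdiff h)^[m+1] u) := by
              rw [marchC, Nat.cast_sum, Finset.sum_mul]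
              exact Finset.sum_congr rfl fun j _ => by push_cast; ring

end Step

section Besov
variable {V : Type*} [NormedAddCommGroup V] [NormedSpace ℝ V] [MeasureSpace V]
  [MeasurableAdd V] [(volume : Measure V).IsAddRightInvariant]
  {q : ℝ≥0∞} {u : V → ℂ} {s : ℝ}

lemma besovSemi_le' {k : ℕ} {c : ℝ≥0∞}
    (H : ∀ a : V, a ≠ 0 →
      ENNReal.ofReal (‖a‖ ^ (-s)) * eLpNorm ((fdiff a)^[k] u) q volume ≤ c) :
    besovSemi s q k u ≤ c :=
  iSup₂_le H

lemma le_besovSemi {k : ℕ} {a : V} (ha : a ≠ 0) :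
    ENNReal.ofReal (‖a‖ ^ (-s)) * eLpNorm ((fdiff a)^[k] u) q volume ≤ besovSemi s q k u :=
  le_iSup₂ (f := fun (h : V) (_ : h ≠ 0) =>
    ENNReal.ofReal (‖h‖ ^ (-s)) * eLpNorm ((fdiff h)^[k] u) q volume) a ha

lemma ofReal_rpow_mul_cancel {a : V} (ha : a ≠ 0) :
    ENNReal.ofReal (‖a‖ ^ s) * ENNReal.ofReal (‖a‖ ^ (-s)) = 1 := by
  rw [← ENNReal.ofReal_mul (by positivity), ← Real.rpow_add (norm_pos_iff.mpr ha),
    add_neg_cancel, Real.rpow_zero, ENNReal.ofReal_one]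

lemma eLpNorm_fdiff_le_besov {k : ℕ} {a : V} (ha : a ≠ 0) :
    eLpNorm ((fdiff a)^[k] u) q volume ≤ ENNReal.ofReal (‖a‖ ^ s) * besovSemi s q k u := by
  calc eLpNorm ((fdiff a)^[k] u) q volume
      = (ENNReal.ofReal (‖a‖ ^ s) * ENNReal.ofReal (‖a‖ ^ (-s))) *
          eLpNorm ((fdiff a)^[k] u) q volume := by rw [ofReal_rpow_mul_cancel ha, one_mul]
    _ = ENNReal.ofReal (‖a‖ ^ s) *
          (ENNReal.ofReal (‖a‖ ^ (-s)) * eLpNorm ((fdiff a)^[k] u) q volume) := by ring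
    _ ≤ ENNReal.ofReal (‖a‖ ^ s) * besovSemi s q k u := by
        gcongr; exact le_besovSemi ha

/-- The easy direction: raising the order of differences. -/
lemma besovSemi_le_of_le (hq : 1 ≤ q) (hu : AEStronglyMeasurable u volume)
    {l m : ℕ} (hlm : l ≤ m) :
    besovSemi s q m u ≤ 2^(m-l) * besovSemi s q l u := by
  refine besovSemi_le' fun a ha => ?_
  have hiter : (fdiff a)^[m] u = (fdiff a)^[m-l] ((fdiff a)^[l] u) := by
    rw [← Function.iterate_add_apply, Nat.sub_add_cancel hlm]
  calc ENNReal.ofReal (‖a‖ ^ (-s)) * eLpNorm ((fdiff a)^[m] u) q volume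
      ≤ ENNReal.ofReal (‖a‖ ^ (-s)) * (2^(m-l) * eLpNorm ((fdiff a)^[l] u) q volume) := by
        gcongr
        rw [hiter]
        exact eLpNorm_fdiff_iter_le hq a (aesm_fdiff_iter a hu l) (m-l)
    _ = 2^(m-l) * (ENNReal.ofReal (‖a‖ ^ (-s)) * eLpNorm ((fdiff a)^[l] u) q volume) := by ring
    _ ≤ 2^(m-l) * besovSemi s q l u := by gcongr; exact le_besovSemi ha

/-- The Marchaud-type step: lowering the order of differences by one. -/
lemma marchaud (hs : 0 < s) {m : ℕ} (hm : s < m) (hq : 1 ≤ q) (hu : MemLp u q volume) :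
    besovSemi s q m u ≤ (marchC m : ℝ≥0∞) * marchK s m * besovSemi s q (m+1) u := by
  have hm0 : m ≠ 0 := by
    rintro rfl; simp at hm; linarith
  set A := besovSemi s q (m+1) u with hA
  set b := ((2:ℝ≥0∞)^m)⁻¹ with hb
  set r := ENNReal.ofReal ((2:ℝ)^s) with hrdef
  set c := (marchC m : ℝ≥0∞) with hc
  set N := eLpNorm u q volume with hN
  have h2m_ne0 : (2:ℝ≥0∞)^m ≠ 0 := pow_ne_zero _ two_ne_zero
  have h2m_netop : (2:ℝ≥0∞)^m ≠ ∞ := ENNReal.pow_ne_top ENNReal.ofNat_ne_top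
  have hb1 : b * (2^m : ℝ≥0∞) = 1 := ENNReal.inv_mul_cancel h2m_ne0 h2m_netop
  refine besovSemi_le' fun h hh => ?_
  set g : ℕ → ℝ≥0∞ := fun i => eLpNorm ((fdiff ((2^i : ℕ) • h))^[m] u) q volume with hg
  set E : ℕ → ℝ≥0∞ := fun i => eLpNorm ((fdiff ((2^i : ℕ) • h))^[m+1] u) q volume with hE
  have hstep : ∀ i, g i ≤ b * g (i+1) + b * (c * E i) := by
    intro i
    have key := step_ineq hq hu.aestronglyMeasurable ((2^i : ℕ) • h) m
    have hdd : (2^i : ℕ) • h + (2^i : ℕ) • h = (2^(i+1) : ℕ) • h := by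
      rw [← add_nsmul]
      congr 1
      rw [pow_succ]; ring
    rw [hdd] at key
    calc g i = b * ((2^m : ℝ≥0∞) * g i) := by rw [← mul_assoc, hb1, one_mul]
      _ ≤ b * (g (i+1) + c * E i) := mul_le_mul_right key b
      _ = b * g (i+1) + b * (c * E i) := by rw [mul_add]
  have claim : ∀ k, g 0 ≤ b^k * g k + ∑ i ∈ Finset.range k, b^(i+1) * (c * E i) := by
    intro k
    induction k with
    | zero => simp
    | succ n ih =>
        calc g 0 ≤ b^n * g n + ∑ i ∈ Finset.range n, b^(i+1) * (c * E i) := ih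
          _ ≤ b^n * (b * g (n+1) + b * (c * E n)) +
              ∑ i ∈ Finset.range n, b^(i+1) * (c * E i) := by gcongr; exact hstep n
          _ = b^(n+1) * g (n+1) +
              (∑ i ∈ Finset.range n, b^(i+1) * (c * E i) + b^(n+1) * (c * E n)) := by
              rw [pow_succ]; ring
          _ = _ := by rw [Finset.sum_range_succ]
  have hgk : ∀ k, g k ≤ 2^m * N :=
    fun k => eLpNorm_fdiff_iter_le hq _ hu.aestronglyMeasurable m
  have hne : ∀ i : ℕ, ((2^i : ℕ) • h) ≠ 0 := by
    intro i
    rw [← Nat.cast_smul_eq_nsmul ℝ]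
    exact smul_ne_zero (by positivity) hh
  have hEi : ∀ i, E i ≤ r^i * (ENNReal.ofReal (‖h‖ ^ s) * A) := by
    intro i
    have hnorm : ‖(2^i : ℕ) • h‖ = (2:ℝ)^i * ‖h‖ := by
      rw [← Nat.cast_smul_eq_nsmul ℝ, norm_smul]
      congr 1
      simp
    calc E i ≤ ENNReal.ofReal (‖(2^i : ℕ) • h‖ ^ s) * A := eLpNorm_fdiff_le_besov (hne i)
      _ = r^i * (ENNReal.ofReal (‖h‖ ^ s) * A) := by
          rw [hnorm, Real.mul_rpow (by positivity) (norm_nonneg h),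
            ENNReal.ofReal_mul (by positivity)]
          have hpow : ((2:ℝ)^i)^s = ((2:ℝ)^s)^i := by
            rw [← Real.rpow_natCast (2:ℝ) i, ← Real.rpow_natCast ((2:ℝ)^s) i,
              ← Real.rpow_mul (by norm_num), ← Real.rpow_mul (by norm_num)]
            ring_nf
          rw [hpow, ENNReal.ofReal_pow (by positivity), hrdef]
          ring
  have hsum : ∀ k, ∑ i ∈ Finset.range k, b^(i+1) * (c * E i) ≤
      c * (ENNReal.ofReal (‖h‖ ^ s) * A) * marchK s m := by
    intro k
    calc ∑ i ∈ Finset.range k, b^(i+1) * (c * E i)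
        ≤ ∑ i ∈ Finset.range k, c * (ENNReal.ofReal (‖h‖ ^ s) * A) * (b^(i+1) * r^i) := by
          refine Finset.sum_le_sum fun i _ => ?_
          calc b^(i+1) * (c * E i) ≤ b^(i+1) * (c * (r^i * (ENNReal.ofReal (‖h‖ ^ s) * A))) := by
                gcongr; exact hEi i
            _ = c * (ENNReal.ofReal (‖h‖ ^ s) * A) * (b^(i+1) * r^i) := by ring
      _ = c * (ENNReal.ofReal (‖h‖ ^ s) * A) * ∑ i ∈ Finset.range k, b^(i+1) * r^i := by
          rw [Finset.mul_sum]
      _ ≤ c * (ENNReal.ofReal (‖h‖ ^ s) * A) * marchK s m := by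
          gcongr
          exact ENNReal.sum_le_tsum _
  have final : ∀ k : ℕ, ENNReal.ofReal (‖h‖ ^ (-s)) * g 0 ≤
      b^k * ((2:ℝ≥0∞)^m * (ENNReal.ofReal (‖h‖ ^ (-s)) * N)) + c * marchK s m * A := by
    intro k
    calc ENNReal.ofReal (‖h‖ ^ (-s)) * g 0
        ≤ ENNReal.ofReal (‖h‖ ^ (-s)) *
            (b^k * (2^m * N) + c * (ENNReal.ofReal (‖h‖ ^ s) * A) * marchK s m) := by
          gcongr
          calc g 0 ≤ b^k * g k + ∑ i ∈ Finset.range k, b^(i+1) * (c * E i) := claim k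
            _ ≤ b^k * (2^m * N) + c * (ENNReal.ofReal (‖h‖ ^ s) * A) * marchK s m := by
                gcongr
                exacts [hgk k, hsum k]
      _ = b^k * ((2:ℝ≥0∞)^m * (ENNReal.ofReal (‖h‖ ^ (-s)) * N)) +
            (ENNReal.ofReal (‖h‖ ^ s) * ENNReal.ofReal (‖h‖ ^ (-s))) *
              (c * marchK s m * A) := by ring
      _ = _ := by rw [ofReal_rpow_mul_cancel hh, one_mul]
  have hb_lt1 : b < 1 := by
    rw [hb, ENNReal.inv_lt_one]
    exact one_lt_pow₀ ENNReal.one_lt_two hm0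
  have hM_ne : ((2:ℝ≥0∞)^m * (ENNReal.ofReal (‖h‖ ^ (-s)) * N)) ≠ ∞ :=
    ENNReal.mul_ne_top h2m_netop (ENNReal.mul_ne_top ENNReal.ofReal_ne_top hu.2.ne)
  have hlim : Filter.Tendsto
      (fun k : ℕ => b^k * ((2:ℝ≥0∞)^m * (ENNReal.ofReal (‖h‖ ^ (-s)) * N)) + c * marchK s m * A)
      Filter.atTop (nhds (c * marchK s m * A)) := by
    have h0 : Filter.Tendsto (fun k : ℕ => b^k) Filter.atTop (nhds 0) :=
      ENNReal.tendsto_pow_atTop_nhds_zero_of_lt_one hb_lt1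
    have h1 := ENNReal.Tendsto.mul_const h0 (Or.inr hM_ne)
    rw [zero_mul] at h1
    have h2 := h1.add (tendsto_const_nhds (x := c * marchK s m * A))
    simpa using h2
  simpa [hg] using ge_of_tendsto' hlim final

end Besov

/-- Lowering the order by any amount, over all Euclidean spaces at once. -/
lemma besov_chain (s : ℝ) (hs : 0 < s) (m : ℕ) (hm : s < m) :
    ∀ j : ℕ, ∃ C : ℝ≥0∞, C ≠ ∞ ∧
      ∀ (d : ℕ) (q : ℝ≥0∞), 1 ≤ q →
        ∀ u : EuclideanSpace ℝ (Fin d) → ℂ, MemLp u q volume →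
          besovSemi s q m u ≤ C * besovSemi s q (m + j) u := by
  intro j
  induction j with
  | zero => exact ⟨1, ENNReal.one_ne_top, fun d q hq u hu => by simpa using le_rfl⟩
  | succ n ih =>
      obtain ⟨C, hC, hCle⟩ := ih
      have hmn : s < (m + n : ℕ) := by push_cast; linarith [hm]
      refine ⟨C * ((marchC (m+n) : ℝ≥0∞) * marchK s (m+n)),
        ENNReal.mul_ne_top hC (ENNReal.mul_ne_top (ENNReal.natCast_ne_top _)
          (marchK_ne_top hmn)), fun d q hq u hu => ?_⟩
      calc besovSemi s q m u ≤ C * besovSemi s q (m + n) u := hCle d q hq u hu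
        _ ≤ C * ((marchC (m+n) : ℝ≥0∞) * marchK s (m+n) * besovSemi s q (m+n+1) u) := by
            gcongr
            exact marchaud hs hmn hq hu
        _ = C * ((marchC (m+n) : ℝ≥0∞) * marchK s (m+n)) * besovSemi s q (m + (n+1)) u := by
            rw [show m + (n+1) = m + n + 1 from rfl]; ring
/-- Equivalence of the Besov–Nikol'skii seminorms for different orders
of finite differences: if `u ∈ L^q(ℝ^d)` and `[u]_{s,l} < ∞` for an integer `l > s`,
then `[u]_{s,m} ≤ C [u]_{s,l}` for any integer `m > s`, where `C` depends only on
`s`, `l`, `m`. -/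

theorem statement7
    (s : ℝ) (hs : 0 < s) (l m : ℕ) (hl : s < l) (hm : s < m) :
    ∃ C : ℝ≥0∞, C ≠ ∞ ∧
      ∀ (d : ℕ) (q : ℝ≥0∞), 1 ≤ q →
        ∀ u : EuclideanSpace ℝ (Fin d) → ℂ, MemLp u q volume →
          besovSemi s q l u < ∞ →
          besovSemi s q m u ≤ C * besovSemi s q l u := by
  rcases le_or_gt l m with hlm | hml
  · exact ⟨2^(m-l), ENNReal.pow_ne_top ENNReal.ofNat_ne_top,
      fun d q hq u hu _ => besovSemi_le_of_le hq hu.aestronglyMeasurable hlm⟩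
  · obtain ⟨C, hC, hCle⟩ := besov_chain s hs m hm (l - m)
    refine ⟨C, hC, fun d q hq u hu _ => ?_⟩
    have := hCle d q hq u hu
    rwa [Nat.add_sub_cancel' hml.le] at this
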